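/- Let μ be a directed metric on a nonempty finite set S and let (V,d) be an extension of (S,μ). Then d is tight if and only if there exists a map ρ : V → T_μ with D_∞(ρ(x), ρ(y)) = d(x,y) for all x,y ∈ V and ρ(s) = μ_s for all s ∈ S. Moreover, if d is tight, then any such ρ satisfies ρ(x) = d_x for all x ∈ V. -/
import Mathlib


open scoped BigOperators

/-- Points of `ℝ^{S^{cr}}`: pairs `p = (p^c, p^r)` of functions `S → ℝ`,
with the componentwise partial order (the product/pi order). -/
abbrev Pt (S : Type*) := (S → ℝ) × (S → ℝ)

/-- `μ` is a directed distance: nonnegative with zero diagonal. -/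
def DirDist {S : Type*} (μ : S → S → ℝ) : Prop :=
  (∀ s t, 0 ≤ μ s t) ∧ (∀ s, μ s s = 0)

/-- `d` is a directed metric: a directed distance satisfying the triangle inequality. -/
def DirMetric {V : Type*} (d : V → V → ℝ) : Prop :=
  DirDist d ∧ ∀ x y z, d x z ≤ d x y + d y z

/-- The polyhedron `Π_μ`. -/
def PiP {S : Type*} (μ : S → S → ℝ) : Set (Pt S) :=
  {p | ∀ s t, μ s t ≤ p.1 s + p.2 t}

/-- The polyhedron `P_μ = Π_μ ∩ ℝ_+^{S^{cr}}`. -/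
def PP {S : Type*} (μ : S → S → ℝ) : Set (Pt S) :=
  {p ∈ PiP μ | 0 ≤ p}

/-- The directed tight span `T_μ`: minimal elements of `P_μ`. -/
def TT {S : Type*} (μ : S → S → ℝ) : Set (Pt S) :=
  {p ∈ PP μ | ∀ q ∈ PP μ, q ≤ p → q = p}

/-- `Q_μ`: minimal elements of `Π_μ`. -/
def QQ {S : Type*} (μ : S → S → ℝ) : Set (Pt S) :=
  {p ∈ PiP μ | ∀ q ∈ PiP μ, q ≤ p → q = p}

/-- `Q_μ^+ = Q_μ ∩ ℝ_+^{S^{cr}}`. -/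
def QP {S : Type*} (μ : S → S → ℝ) : Set (Pt S) :=
  QQ μ ∩ {p | 0 ≤ p}

/-- `D_∞^+(f,g) = max_x (g(x) - f(x))_+`. -/
noncomputable def Dplus {X : Type*} [Fintype X] (f g : X → ℝ) : ℝ :=
  ⨆ x, max (g x - f x) 0

/-- `D_∞(p,q) = max ( D_∞^+(p^c,q^c), D_∞^+(q^r,p^r) )`. -/
noncomputable def Dinf {S : Type*} [Fintype S] (p q : Pt S) : ℝ :=
  max (Dplus p.1 q.1) (Dplus q.2 p.2)

/-- A subset `R` is balanced if no pair `p, q ∈ R` satisfies `p^c < q^c`,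
and no pair satisfies `p^r < q^r`. -/
def BalancedSet {S : Type*} (R : Set (Pt S)) : Prop :=
  (¬ ∃ p ∈ R, ∃ q ∈ R, ∀ s, p.1 s < q.1 s) ∧
  (¬ ∃ p ∈ R, ∃ q ∈ R, ∀ s, p.2 s < q.2 s)

/-- The vector `e = (1, -1)` spanning the linearity space of `Π_μ`. -/
def eVec (S : Type*) : Pt S := (fun _ => 1, fun _ => -1)

/-- `R ⊆ Q_μ` is a section: every point of `Q_μ` differs from exactly one point
of `R` by a multiple of `e`. -/
def IsSection {S : Type*} (μ : S → S → ℝ) (R : Set (Pt S)) : Prop :=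
  R ⊆ QQ μ ∧ ∀ q ∈ QQ μ, ∃! p, p ∈ R ∧ ∃ α : ℝ, q - p = α • eVec S

/-- The length of the cycle `(x 0, x 1, …, x m)` with respect to `d`. -/
def cycLen {V : Type*} (d : V → V → ℝ) (m : ℕ) (x : Fin (m + 1) → V) : ℝ :=
  ∑ i, d (x i) (x (i + 1))


/-- The canonical point `μ_s` of `ℝ^{S^{cr}}`. -/
def muVec {S : Type*} (μ : S → S → ℝ) (s : S) : Pt S :=
  (fun t => μ t s, fun t => μ s t)

/-- The point `d_x ∈ ℝ^{S^{cr}}` associated with `x ∈ V`. -/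
def dVec {V : Type*} (S : Set V) (d : V → V → ℝ) (x : V) : Pt S :=
  (fun s => d s x, fun s => d x s)

/-- `(V,d)` is a tight extension of `(S,μ)`:  `d` is a directed metric on `V`
restricting to `μ` on `S`, and no other extension is pointwise smaller. -/
def IsTightExt {V : Type*} (S : Set V) (μ : S → S → ℝ) (d : V → V → ℝ) : Prop :=
  DirMetric d ∧ (∀ s t : S, d s t = μ s t) ∧
  ¬ ∃ d' : V → V → ℝ, DirMetric d' ∧ (∀ s t : S, d' s t = μ s t) ∧
      (∀ x y, d' x y ≤ d x y) ∧ d' ≠ d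
section Helpers

variable {S : Type*} [Fintype S] [Nonempty S]

private lemma bddA (f : S → ℝ) : BddAbove (Set.range f) := (Set.finite_range f).bddAbove

lemma le_dplus (f g : S → ℝ) (x : S) : g x - f x ≤ Dplus f g :=
  le_trans (le_max_left _ _) (le_ciSup (f := fun x => max (g x - f x) 0) (bddA _) x)

lemma dplus_nonneg (f g : S → ℝ) : 0 ≤ Dplus f g :=
  le_trans (le_max_right _ _)
    (le_ciSup (f := fun x => max (g x - f x) 0) (bddA _) (Classical.arbitrary S))

lemma dplus_le {f g : S → ℝ} {c : ℝ} (h0 : 0 ≤ c) (h : ∀ x, g x - f x ≤ c) :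
    Dplus f g ≤ c := ciSup_le fun x => max_le (h x) h0

lemma dplus_exists (f g : S → ℝ) : ∃ x, Dplus f g = max (g x - f x) 0 := by
  obtain ⟨x, hx⟩ := Finite.exists_max fun x => max (g x - f x) 0
  exact ⟨x, le_antisymm (ciSup_le hx) (le_ciSup (f := fun x => max (g x - f x) 0) (bddA _) x)⟩

lemma dinf_nonneg (p q : Pt S) : 0 ≤ Dinf p q :=
  le_trans (dplus_nonneg _ _) (le_max_left _ _)

lemma dinf_self (p : Pt S) : Dinf p p = 0 := by
  have h : ∀ f : S → ℝ, Dplus f f = 0 := fun f =>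
    le_antisymm (dplus_le le_rfl (by simp)) (dplus_nonneg _ _)
  simp [Dinf, h]

lemma dinf_triangle (p q r : Pt S) : Dinf p r ≤ Dinf p q + Dinf q r := by
  have h0 : (0:ℝ) ≤ Dinf p q + Dinf q r := add_nonneg (dinf_nonneg _ _) (dinf_nonneg _ _)
  have m1 := le_max_left (Dplus p.1 q.1) (Dplus q.2 p.2)
  have m2 := le_max_right (Dplus p.1 q.1) (Dplus q.2 p.2)
  have m3 := le_max_left (Dplus q.1 r.1) (Dplus r.2 q.2)
  have m4 := le_max_right (Dplus q.1 r.1) (Dplus r.2 q.2)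
  refine max_le (dplus_le h0 fun x => ?_) (dplus_le h0 fun x => ?_)
  · have h1 := le_dplus p.1 q.1 x
    have h2 := le_dplus q.1 r.1 x
    simp only [Dinf] at *
    linarith
  · have h1 := le_dplus q.2 p.2 x
    have h2 := le_dplus r.2 q.2 x
    simp only [Dinf] at *
    linarith

end Helpers
section TTfacts

set_option linter.unusedSectionVars false

variable {S : Type*} [Fintype S] [Nonempty S] {μ : S → S → ℝ}

lemma pp_feas {p : Pt S} (hp : p ∈ PP μ) (s t : S) : μ s t ≤ p.1 s + p.2 t := hp.1 s t

lemma pp_nn1 {p : Pt S} (hp : p ∈ PP μ) (s : S) : 0 ≤ p.1 s := hp.2.1 s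

lemma pp_nn2 {p : Pt S} (hp : p ∈ PP μ) (s : S) : 0 ≤ p.2 s := hp.2.2 s

/-- Sufficient condition for minimality. -/
lemma tt_of {p : Pt S} (hp : p ∈ PP μ)
    (h1 : ∀ s, p.1 s = 0 ∨ ∃ t, p.1 s + p.2 t = μ s t)
    (h2 : ∀ t, p.2 t = 0 ∨ ∃ s, p.1 s + p.2 t = μ s t) : p ∈ TT μ := by
  refine ⟨hp, fun q hq hle => ?_⟩
  have hc : ∀ s, q.1 s = p.1 s := by
    intro s
    rcases h1 s with h | ⟨t, ht⟩
    · have h1 := pp_nn1 hq s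
      have h2 := hle.1 s
      rw [h] at h2
      linarith
    · have h3 := pp_feas hq s t
      have h4 := hle.2 t
      have h5 := hle.1 s
      linarith
  have hr : ∀ t, q.2 t = p.2 t := by
    intro t
    rcases h2 t with h | ⟨s, hs⟩
    · have h1 := pp_nn2 hq t
      have h6 := hle.2 t
      rw [h] at h6
      linarith
    · have h3 := pp_feas hq s t
      have h4 := hle.1 s
      have h5 := hle.2 t
      linarith
  exact Prod.ext (funext hc) (funext hr)

/-- Necessary condition, column side. -/
lemma tt_c {p : Pt S} (hp : p ∈ TT μ) (s : S) :
    p.1 s = 0 ∨ ∃ t, p.1 s + p.2 t = μ s t := by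
  classical
  by_contra hcon
  push_neg at hcon
  obtain ⟨hne, hall⟩ := hcon
  have hpos : 0 < p.1 s := lt_of_le_of_ne (pp_nn1 hp.1 s) (Ne.symm hne)
  obtain ⟨t₀, ht₀⟩ := Finite.exists_min fun t => p.2 t - μ s t
  have hslack : 0 < p.1 s + p.2 t₀ - μ s t₀ :=
    lt_of_le_of_ne (by linarith [pp_feas hp.1 s t₀]) (by intro h; exact hall t₀ (by linarith))
  set ε : ℝ := min (p.1 s) (p.1 s + p.2 t₀ - μ s t₀) with hε
  have hεpos : 0 < ε := lt_min hpos hslack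
  set q : Pt S := (fun u => if u = s then p.1 s - ε else p.1 u, p.2) with hqdef
  have hq1 : ∀ u, q.1 u = if u = s then p.1 s - ε else p.1 u := fun u => rfl
  have hεle1 : ε ≤ p.1 s := min_le_left _ _
  have hεle2 : ε ≤ p.1 s + p.2 t₀ - μ s t₀ := min_le_right _ _
  have hqPP : q ∈ PP μ := by
    refine ⟨fun u t => ?_, fun u => ?_, hp.1.2.2⟩
    · rw [hq1]
      by_cases h : u = s
      · subst h
        rw [if_pos rfl]
        have h8 := ht₀ t
        linarith
      · rw [if_neg h]; exact pp_feas hp.1 u t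
    · show (0:ℝ) ≤ q.1 u
      rw [hq1]
      by_cases h : u = s
      · subst h; rw [if_pos rfl]; linarith
      · rw [if_neg h]; exact pp_nn1 hp.1 u
  have hqle : q ≤ p := by
    refine ⟨fun u => ?_, le_rfl⟩
    show q.1 u ≤ p.1 u
    rw [hq1]
    by_cases h : u = s
    · subst h; rw [if_pos rfl]; linarith
    · rw [if_neg h]
  have heq := hp.2 q hqPP hqle
  have h9 : q.1 s = p.1 s := by rw [heq]
  rw [hq1 s, if_pos rfl] at h9
  linarith

/-- Necessary condition, row side. -/
lemma tt_r {p : Pt S} (hp : p ∈ TT μ) (t : S) :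
    p.2 t = 0 ∨ ∃ s, p.1 s + p.2 t = μ s t := by
  classical
  by_contra hcon
  push_neg at hcon
  obtain ⟨hne, hall⟩ := hcon
  have hpos : 0 < p.2 t := lt_of_le_of_ne (pp_nn2 hp.1 t) (Ne.symm hne)
  obtain ⟨s₀, hs₀⟩ := Finite.exists_min fun s => p.1 s - μ s t
  have hslack : 0 < p.1 s₀ + p.2 t - μ s₀ t :=
    lt_of_le_of_ne (by linarith [pp_feas hp.1 s₀ t]) (by intro h; exact hall s₀ (by linarith))
  set ε : ℝ := min (p.2 t) (p.1 s₀ + p.2 t - μ s₀ t) with hε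
  have hεpos : 0 < ε := lt_min hpos hslack
  set q : Pt S := (p.1, fun u => if u = t then p.2 t - ε else p.2 u) with hqdef
  have hq2 : ∀ u, q.2 u = if u = t then p.2 t - ε else p.2 u := fun u => rfl
  have hεle1 : ε ≤ p.2 t := min_le_left _ _
  have hεle2 : ε ≤ p.1 s₀ + p.2 t - μ s₀ t := min_le_right _ _
  have hqPP : q ∈ PP μ := by
    refine ⟨fun u v => ?_, hp.1.2.1, fun v => ?_⟩
    · rw [hq2]
      by_cases h : v = t
      · subst h
        rw [if_pos rfl]
        have h8 := hs₀ u
        linarith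
      · rw [if_neg h]; exact pp_feas hp.1 u v
    · show (0:ℝ) ≤ q.2 v
      rw [hq2]
      by_cases h : v = t
      · subst h; rw [if_pos rfl]; linarith
      · rw [if_neg h]; exact pp_nn2 hp.1 v
  have hqle : q ≤ p := by
    refine ⟨le_rfl, fun u => ?_⟩
    show q.2 u ≤ p.2 u
    rw [hq2]
    by_cases h : u = t
    · subst h; rw [if_pos rfl]; linarith
    · rw [if_neg h]
  have heq := hp.2 q hqPP hqle
  have h9 : q.2 t = p.2 t := by rw [heq]
  rw [hq2 t, if_pos rfl] at h9
  linarith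

lemma tt_lipc (hμ : DirMetric μ) {p : Pt S} (hp : p ∈ TT μ) (s u : S) :
    p.1 s ≤ μ s u + p.1 u := by
  rcases tt_c hp s with h | ⟨t, ht⟩
  · rw [h]; exact add_nonneg (hμ.1.1 s u) (pp_nn1 hp.1 u)
  · have h1 := hμ.2 s u t
    have h2 := pp_feas hp.1 u t
    linarith

lemma tt_lipr (hμ : DirMetric μ) {p : Pt S} (hp : p ∈ TT μ) (t u : S) :
    p.2 t ≤ p.2 u + μ u t := by
  rcases tt_r hp t with h | ⟨s, hs⟩
  · rw [h]; exact add_nonneg (pp_nn2 hp.1 u) (hμ.1.1 u t)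
  · have h1 := hμ.2 s u t
    have h2 := pp_feas hp.1 s u
    linarith

lemma muVec_mem_tt (hμ : DirMetric μ) (s : S) : muVec μ s ∈ TT μ := by
  refine tt_of ⟨fun t u => ?_, fun t => hμ.1.1 t s, fun t => hμ.1.1 s t⟩
    (fun t => Or.inr ⟨s, by simp [muVec, hμ.1.2 s]⟩)
    (fun u => Or.inr ⟨s, by simp [muVec, hμ.1.2 s]⟩)
  exact hμ.2 t s u

lemma exists_tt_le {q : Pt S} (hq : q ∈ PP μ) : ∃ p ∈ TT μ, p ≤ q := by
  set c : S → ℝ := fun s => Dplus q.2 (fun t => μ s t) with hc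
  set r : S → ℝ := fun t => Dplus c (fun s => μ s t) with hr
  have hcge : ∀ s t, μ s t - q.2 t ≤ c s := fun s t => le_dplus _ _ t
  have hcnn : ∀ s, 0 ≤ c s := fun s => dplus_nonneg _ _
  have hcle : ∀ s, c s ≤ q.1 s := fun s =>
    dplus_le (pp_nn1 hq s) fun t => by linarith [pp_feas hq s t]
  have hrge : ∀ s t, μ s t - c s ≤ r t := fun s t => le_dplus c (fun s => μ s t) s
  have hrnn : ∀ t, 0 ≤ r t := fun t => dplus_nonneg _ _
  have hrle : ∀ t, r t ≤ q.2 t := fun t =>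
    dplus_le (pp_nn2 hq t) fun s => by linarith [hcge s t]
  have hpPP : (c, r) ∈ PP μ := ⟨fun s t => by linarith [hrge s t], hcnn, hrnn⟩
  refine ⟨(c, r), tt_of hpPP (fun s => ?_) (fun t => ?_), hcle, hrle⟩
  · obtain ⟨t₀, ht₀⟩ := dplus_exists (q.2) (fun t => μ s t)
    rcases le_total (μ s t₀ - q.2 t₀) 0 with h | h
    · left
      show Dplus q.2 (fun t => μ s t) = 0
      rw [ht₀, max_eq_right h]
    · right
      refine ⟨t₀, ?_⟩
      have hcs : c s = μ s t₀ - q.2 t₀ := by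
        show Dplus q.2 (fun t => μ s t) = _
        rw [ht₀, max_eq_left h]
      have h1 : r t₀ ≤ q.2 t₀ := hrle t₀
      have h2 : μ s t₀ - c s ≤ r t₀ := hrge s t₀
      show c s + r t₀ = μ s t₀
      linarith
  · obtain ⟨s₀, hs₀⟩ := dplus_exists c (fun s => μ s t)
    rcases le_total (μ s₀ t - c s₀) 0 with h | h
    · left
      show Dplus c (fun s => μ s t) = 0
      rw [hs₀, max_eq_right h]
    · right
      refine ⟨s₀, ?_⟩
      have hrt : r t = μ s₀ t - c s₀ := by
        show Dplus c (fun s => μ s t) = _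
        rw [hs₀, max_eq_left h]
      show c s₀ + r t = μ s₀ t
      linarith

lemma dinf_muVec_left (hμ : DirMetric μ) {p : Pt S} (hp : p ∈ TT μ) (s : S) :
    Dinf (muVec μ s) p = p.1 s := by
  refine le_antisymm (max_le (dplus_le (pp_nn1 hp.1 s) fun u => ?_)
    (dplus_le (pp_nn1 hp.1 s) fun u => ?_)) ?_
  · have := tt_lipc hμ hp u s
    simp only [muVec]
    linarith
  · have := pp_feas hp.1 s u
    simp only [muVec]
    linarith
  · have h1 := le_dplus (muVec μ s).1 p.1 s
    simp only [muVec] at h1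
    rw [hμ.1.2 s] at h1
    calc p.1 s = p.1 s - 0 := by ring
    _ ≤ Dplus (muVec μ s).1 p.1 := h1
    _ ≤ Dinf (muVec μ s) p := le_max_left _ _

lemma dinf_muVec_right (hμ : DirMetric μ) {p : Pt S} (hp : p ∈ TT μ) (s : S) :
    Dinf p (muVec μ s) = p.2 s := by
  refine le_antisymm (max_le (dplus_le (pp_nn2 hp.1 s) fun u => ?_)
    (dplus_le (pp_nn2 hp.1 s) fun u => ?_)) ?_
  · have := pp_feas hp.1 u s
    simp only [muVec]
    linarith
  · have := tt_lipr hμ hp u s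
    simp only [muVec]
    linarith
  · have h1 := le_dplus (muVec μ s).2 p.2 s
    simp only [muVec] at h1
    rw [hμ.1.2 s] at h1
    calc p.2 s = p.2 s - 0 := by ring
    _ ≤ Dplus (muVec μ s).2 p.2 := h1
    _ ≤ Dinf p (muVec μ s) := le_max_right _ _

lemma dinf_muVec_muVec (hμ : DirMetric μ) (s t : S) :
    Dinf (muVec μ s) (muVec μ t) = μ s t :=
  dinf_muVec_left hμ (muVec_mem_tt hμ t) s

end TTfacts
section Vlevel

set_option linter.unusedSectionVars false

variable {V : Type*} (S : Set V) [Fintype S] [Nonempty ↥S]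
  (μ : S → S → ℝ) (d : V → V → ℝ)


lemma dVec_coe (hext : ∀ s t : S, d s t = μ s t) (s : S) :
    dVec S d ↑s = muVec μ s :=
  Prod.ext (funext fun t => hext t s) (funext fun t => hext s t)

lemma dinf_dVec_le (hd : DirMetric d) (x y : V) :
    Dinf (dVec S d x) (dVec S d y) ≤ d x y := by
  refine max_le (dplus_le (hd.1.1 x y) fun s => ?_) (dplus_le (hd.1.1 x y) fun s => ?_)
  · have := hd.2 (↑s) x y
    simp only [dVec]
    linarith
  · have := hd.2 x y (↑s)
    simp only [dVec]
    linarith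

lemma tight_key (hμ : DirMetric μ) (hd : DirMetric d)
    (hext : ∀ s t : S, d s t = μ s t) (htight : IsTightExt S μ d)
    (x : V) (q : Pt ↥S) (hq : q ∈ TT μ) (hle : q ≤ dVec S d x) : q = dVec S d x := by
  obtain ⟨-, -, hmin⟩ := htight
  push_neg at hmin
  set F : V → ℝ := fun u => ⨅ s : S, (d u ↑s + q.1 s) with hF
  set G : V → ℝ := fun u => ⨅ s : S, (q.2 s + d ↑s u) with hG
  set f : V → ℝ := fun u => min (d u x) (F u) with hf
  set g : V → ℝ := fun u => min (d x u) (G u) with hg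
  have hFle : ∀ u (s : S), F u ≤ d u ↑s + q.1 s := fun u s =>
    ciInf_le (Set.finite_range _).bddBelow s
  have hGle : ∀ u (s : S), G u ≤ q.2 s + d ↑s u := fun u s =>
    ciInf_le (Set.finite_range _).bddBelow s
  have hf0 : ∀ u, 0 ≤ f u :=
    fun u => le_min (hd.1.1 u x)
      (le_ciInf fun s => add_nonneg (hd.1.1 u ↑s) (pp_nn1 hq.1 s))
  have hg0 : ∀ u, 0 ≤ g u :=
    fun u => le_min (hd.1.1 x u)
      (le_ciInf fun s => add_nonneg (pp_nn2 hq.1 s) (hd.1.1 (↑s) u))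
  have hflip : ∀ u v, f u ≤ d u v + f v := by
    intro u v
    have h1 : f u ≤ d u v + d v x := (min_le_left _ _).trans (hd.2 u v x)
    have h2 : f u - d u v ≤ F v := by
      refine le_ciInf fun s => ?_
      have h3 : f u ≤ F u := min_le_right _ _
      have h4 := hFle u s
      have h5 := hd.2 u v (↑s)
      linarith
    have hfv : f v = min (d v x) (F v) := rfl
    rcases min_cases (d v x) (F v) with ⟨hm, -⟩ | ⟨hm, -⟩ <;> rw [hfv, hm]
    · exact h1
    · linarith
  have hglip : ∀ u v, g v ≤ g u + d u v := by
    intro u v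
    have h1 : g v ≤ d x u + d u v := by
      have := hd.2 x u v
      have := min_le_left (d x v) (G v)
      linarith [show g v ≤ d x v from min_le_left _ _]
    have h2 : g v - d u v ≤ G u := by
      refine le_ciInf fun s => ?_
      have h3 : g v ≤ G v := min_le_right _ _
      have h4 := hGle v s
      have h5 := hd.2 (↑s) u v
      linarith
    have hgu : g u = min (d x u) (G u) := rfl
    rcases min_cases (d x u) (G u) with ⟨hm, -⟩ | ⟨hm, -⟩ <;> rw [hgu, hm]
    · linarith
    · linarith
  have hfS : ∀ s : S, f ↑s = q.1 s := by
    intro s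
    refine le_antisymm ?_ (le_min (hle.1 s) (le_ciInf fun u => ?_))
    · have h1 : f ↑s ≤ F ↑s := min_le_right _ _
      have h2 := hFle (↑s) s
      have h3 : d (↑s) ↑s = 0 := hd.1.2 ↑s
      linarith
    · have h4 := tt_lipc hμ hq s u
      rw [← hext s u] at h4
      exact h4
  have hgS : ∀ s : S, g ↑s = q.2 s := by
    intro s
    refine le_antisymm ?_ (le_min (hle.2 s) (le_ciInf fun u => ?_))
    · have h1 : g ↑s ≤ G ↑s := min_le_right _ _
      have h2 := hGle (↑s) s
      have h3 : d (↑s) ↑s = 0 := hd.1.2 ↑s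
      linarith
    · have h4 := tt_lipr hμ hq s u
      rw [← hext u s] at h4
      exact h4
  have hfx : f x = 0 :=
    le_antisymm ((min_le_left _ _).trans_eq (hd.1.2 x)) (hf0 x)
  have hgx : g x = 0 :=
    le_antisymm ((min_le_left _ _).trans_eq (hd.1.2 x)) (hg0 x)
  set d' : V → V → ℝ := fun u v => min (d u v) (f u + g v) with hd'
  have hd'le : ∀ u v, d' u v ≤ d u v := fun u v => min_le_left _ _
  have hd'0 : ∀ u v, 0 ≤ d' u v := fun u v =>
    le_min (hd.1.1 u v) (add_nonneg (hf0 u) (hg0 v))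
  have hd'refl : ∀ u, d' u u = 0 := fun u =>
    le_antisymm ((hd'le u u).trans_eq (hd.1.2 u)) (hd'0 u u)
  have hd'tri : ∀ u v w, d' u w ≤ d' u v + d' v w := by
    intro u v w
    have i1 : d' u w ≤ d u v + d v w := (min_le_left _ _).trans (hd.2 u v w)
    have i2 : d' u w ≤ d u v + (f v + g w) := by
      have := hflip u v
      have := min_le_right (d u w) (f u + g w)
      linarith [show d' u w ≤ f u + g w from min_le_right _ _]
    have i3 : d' u w ≤ (f u + g v) + d v w := by
      have := hglip v w
      linarith [show d' u w ≤ f u + g w from min_le_right _ _]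
    have i4 : d' u w ≤ (f u + g v) + (f v + g w) := by
      have := hf0 v
      have := hg0 v
      linarith [show d' u w ≤ f u + g w from min_le_right _ _]
    have huv : d' u v = min (d u v) (f u + g v) := rfl
    have hvw : d' v w = min (d v w) (f v + g w) := rfl
    rcases min_cases (d u v) (f u + g v) with ⟨hm1, -⟩ | ⟨hm1, -⟩ <;>
      rcases min_cases (d v w) (f v + g w) with ⟨hm2, -⟩ | ⟨hm2, -⟩ <;>
      rw [huv, hvw, hm1, hm2] <;> assumption
  have hd'ext : ∀ s t : S, d' ↑s ↑t = μ s t := by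
    intro s t
    have : d' ↑s ↑t = min (d ↑s ↑t) (f ↑s + g ↑t) := rfl
    rw [this, hfS, hgS, hext s t]
    exact min_eq_left (pp_feas hq.1 s t)
  have heq : d' = d := hmin d' ⟨⟨hd'0, hd'refl⟩, hd'tri⟩ hd'ext hd'le
  have hq1 : ∀ s : S, q.1 s = d ↑s x := by
    intro s
    have h1 : d' ↑s x = d ↑s x := by rw [heq]
    have h2 : d' ↑s x = min (d ↑s x) (q.1 s + 0) := by
      have : d' ↑s x = min (d ↑s x) (f ↑s + g x) := rfl
      rw [this, hfS, hgx]
    rw [h2] at h1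
    have h3 : d ↑s x ≤ q.1 s + 0 := min_eq_left_iff.mp h1
    have h4 := hle.1 s
    have : q.1 s ≤ d ↑s x := h4
    linarith
  have hq2 : ∀ s : S, q.2 s = d x ↑s := by
    intro s
    have h1 : d' x ↑s = d x ↑s := by rw [heq]
    have h2 : d' x ↑s = min (d x ↑s) (0 + q.2 s) := by
      have : d' x ↑s = min (d x ↑s) (f x + g ↑s) := rfl
      rw [this, hfx, hgS]
    rw [h2] at h1
    have h3 : d x ↑s ≤ 0 + q.2 s := min_eq_left_iff.mp h1
    have h4 : q.2 s ≤ d x ↑s := hle.2 s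
    linarith
  exact Prod.ext (funext fun s => hq1 s) (funext fun s => hq2 s)

end Vlevel
section Main

set_option linter.unusedSectionVars false

variable {V : Type*} (S : Set V) [Fintype S] [Nonempty ↥S]
  (μ : S → S → ℝ) (d : V → V → ℝ)

/-- Uniqueness of the embedding (no tightness needed). -/
lemma rho_eq (hμ : DirMetric μ) (ρ : V → Pt ↥S)
    (hmem : ∀ x, ρ x ∈ TT μ) (hiso : ∀ x y, Dinf (ρ x) (ρ y) = d x y)
    (hco : ∀ s : S, ρ ↑s = muVec μ s) (x : V) : ρ x = dVec S d x := by
  refine Prod.ext (funext fun s => ?_) (funext fun s => ?_)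
  · have h1 := dinf_muVec_left hμ (hmem x) s
    rw [← hco s, hiso (↑s) x] at h1
    exact h1.symm
  · have h1 := dinf_muVec_right hμ (hmem x) s
    rw [← hco s, hiso x ↑s] at h1
    exact h1.symm

lemma tight_of_rho (hμ : DirMetric μ) (hd : DirMetric d)
    (hext : ∀ s t : S, d s t = μ s t) (ρ : V → Pt ↥S)
    (hmem : ∀ x, ρ x ∈ TT μ) (hiso : ∀ x y, Dinf (ρ x) (ρ y) = d x y)
    (hco : ∀ s : S, ρ ↑s = muVec μ s) : IsTightExt S μ d := by
  have hρ : ∀ x, ρ x = dVec S d x := rho_eq S μ d hμ ρ hmem hiso hco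
  have hmem' : ∀ x, dVec S d x ∈ TT μ := fun x => hρ x ▸ hmem x
  have hiso' : ∀ x y, Dinf (dVec S d x) (dVec S d y) = d x y := fun x y => by
    rw [← hρ x, ← hρ y]; exact hiso x y
  refine ⟨hd, hext, ?_⟩
  rintro ⟨d', hd', hext', hle', hne⟩
  apply hne
  funext x y
  refine le_antisymm (hle' x y) ?_
  have h0 : 0 ≤ d' x y := hd'.1.1 x y
  have hdx0 : 0 ≤ d x y := hd.1.1 x y
  have hxy : d x y = Dinf (dVec S d x) (dVec S d y) := (hiso' x y).symm
  rcases max_cases (Dplus (dVec S d x).1 (dVec S d y).1)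
      (Dplus (dVec S d y).2 (dVec S d x).2) with ⟨hm, -⟩ | ⟨hm, -⟩
  · rw [Dinf, hm] at hxy
    obtain ⟨s, hs⟩ := dplus_exists (dVec S d x).1 (dVec S d y).1
    rw [hs] at hxy
    simp only [dVec] at hxy
    rcases le_total (d ↑s y - d ↑s x) 0 with h | h
    · rw [max_eq_right h] at hxy
      rw [hxy]; exact h0
    · rw [max_eq_left h] at hxy
      rcases tt_c (hmem' y) s with hz | ⟨t, ht⟩
      · have hz' : d (↑s) y = 0 := hz
        have := hd.1.1 (↑s) x
        have hle0 : d x y ≤ 0 := by rw [hxy, hz']; linarith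
        linarith
      · have ht' : d (↑s) y + d y ↑t = μ s t := ht
        have e1 : d' ↑s ↑t = μ s t := hext' s t
        have e2 := hd'.2 (↑s) x ↑t
        have e3 := hd'.2 x y (↑t)
        have e4 := hle' (↑s) x
        have e5 := hle' y ↑t
        linarith
  · rw [Dinf, hm] at hxy
    obtain ⟨s, hs⟩ := dplus_exists (dVec S d y).2 (dVec S d x).2
    rw [hs] at hxy
    simp only [dVec] at hxy
    rcases le_total (d x ↑s - d y ↑s) 0 with h | h
    · rw [max_eq_right h] at hxy
      rw [hxy]; exact h0
    · rw [max_eq_left h] at hxy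
      rcases tt_r (hmem' x) s with hz | ⟨t, ht⟩
      · have hz' : d x ↑s = 0 := hz
        have := hd.1.1 y ↑s
        have hle0 : d x y ≤ 0 := by rw [hxy, hz']; linarith
        linarith
      · have ht' : d (↑t) x + d x ↑s = μ t s := ht
        have e1 : d' ↑t ↑s = μ t s := hext' t s
        have e2 := hd'.2 (↑t) x ↑s
        have e3 := hd'.2 x y (↑s)
        have e4 := hle' (↑t) x
        have e5 := hle' y ↑s
        linarith

end Main

/-- Theorem 2.12 (1).  An extension `d` of `μ` is tight iff there is an isometric
embedding `ρ : V → T_μ` with `ρ(s) = μ_s` for `s ∈ S`; moreover if `d` is tight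
then any such `ρ` is `x ↦ d_x`. -/
theorem stmt11 {V : Type*} (S : Set V) [Fintype S] (hS : S.Nonempty)
    (μ : S → S → ℝ) (hμ : DirMetric μ)
    (d : V → V → ℝ) (hd : DirMetric d) (hext : ∀ s t : S, d s t = μ s t) :
    (IsTightExt S μ d ↔
      ∃ ρ : V → Pt S, (∀ x, ρ x ∈ TT μ) ∧
        (∀ x y, Dinf (ρ x) (ρ y) = d x y) ∧
        (∀ s : S, ρ s = muVec μ s)) ∧
    (IsTightExt S μ d →
      ∀ ρ : V → Pt S, (∀ x, ρ x ∈ TT μ) →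
        (∀ x y, Dinf (ρ x) (ρ y) = d x y) →
        (∀ s : S, ρ s = muVec μ s) →
        ∀ x, ρ x = dVec S d x) := by
  haveI : Nonempty ↥S := hS.to_subtype
  constructor
  · constructor
    · intro htight
      refine ⟨dVec S d, ?_, ?_, dVec_coe S μ d hext⟩
      · intro x
        have hPP : dVec S d x ∈ PP μ := by
          refine ⟨fun s t => ?_, fun s => hd.1.1 _ _, fun s => hd.1.1 _ _⟩
          have := hd.2 (↑s) x ↑t
          rw [hext s t] at this
          exact this
        refine ⟨hPP, fun q hq hle => ?_⟩
        obtain ⟨q', hq', hle'⟩ := exists_tt_le hq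
        have hkey := tight_key S μ d hμ hd hext htight x q' hq' (hle'.trans hle)
        have hge : dVec S d x ≤ q := hkey ▸ hle'
        exact le_antisymm hle hge
      · intro x y
        set D : V → V → ℝ := fun x y => Dinf (dVec S d x) (dVec S d y) with hD
        have hDm : DirMetric D :=
          ⟨⟨fun x y => dinf_nonneg _ _, fun x => dinf_self _⟩,
            fun x y z => dinf_triangle _ _ _⟩
        have hDext : ∀ s t : S, D ↑s ↑t = μ s t := by
          intro s t
          have : D ↑s ↑t = Dinf (dVec S d ↑s) (dVec S d ↑t) := rfl
          rw [this, dVec_coe S μ d hext s, dVec_coe S μ d hext t]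
          exact dinf_muVec_muVec hμ s t
        obtain ⟨-, -, hmin⟩ := htight
        push_neg at hmin
        have heq := hmin D hDm hDext (dinf_dVec_le S d hd)
        have : D x y = d x y := by rw [heq]
        exact this
    · rintro ⟨ρ, hmem, hiso, hco⟩
      exact tight_of_rho S μ d hμ hd hext ρ hmem hiso hco
  · intro _ ρ hmem hiso hco
    exact rho_eq S μ d hμ ρ hmem hiso hco
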